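/- arXiv:0709.0124 — 5 statements merged into one kernel-verified Lean document; each statement's English description precedes it below -/
import Mathlib

section
/- Let N be a positive integer and let A, C, D be N×N complex matrices. There exist functions f_1, …, f_N : ℝ×ℝ → ℂ such that for every complex row vector s = (x_1, …, x_N) with x_n = x_{nI} + i·x_{nQ} one has s·A·sᴴ + s·C·sᵀ + s*·D·sᴴ = Σ_{n=1}^N f_n(x_{nI}, x_{nQ}), if and only if the three matrices A, C + Cᵀ, and D + Dᵀ are diagonal. -/
open Matrix

/-!
Write `Q(s) = s A sᴴ + s C sᵀ + s* D sᴴ`. If `Q(s) = ∑ₙ gₙ(sₙ)`, then for `p ≠ q` the value of `Q`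
at `a eₚ + b e_q`, plus `Q(0)`, equals `Q(a eₚ) + Q(b e_q)`. Expanding `Q`, the defect is
`a Aₚ_q b̄ + b A_qₚ ā + a b (C + Cᵀ)ₚ_q + ā b̄ (D + Dᵀ)ₚ_q`, and evaluating it at `a, b ∈ {1, i}`
shows that all four coefficients vanish. Conversely, `s C sᵀ` only sees `C + Cᵀ`, whose
off-diagonal entries cancel in pairs, so under the diagonality conditions `Q` is a sum of
one-coordinate terms.
-/

theorem Fintype.sum_apply_add_add_sum_apply_zero {ι α M : Type*} [Fintype ι] [AddZeroClass α]
    [AddCommMonoid M] (g : ι → α → M) {x y : ι → α} (hxy : ∀ i, x i = 0 ∨ y i = 0) :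
    ∑ i, g i (x i + y i) + ∑ i, g i 0 = ∑ i, g i (x i) + ∑ i, g i (y i) := by
  rw [← Finset.sum_add_distrib, ← Finset.sum_add_distrib]
  refine Finset.sum_congr rfl fun i _ => ?_
  rcases hxy i with hx | hy
  · simp [hx, add_comm]
  · simp [hy]

section Bilinear

variable {n R : Type*} [Fintype n] [CommRing R]

theorem dotProduct_vecMul_of_isDiag {M : Matrix n n R} (hM : M.IsDiag)
    (u v : n → R) : u ᵥ* M ⬝ᵥ v = ∑ i, u i * M i i * v i := by
  classical
  rw [← hM.diagonal_diag]
  simp [dotProduct, vecMul_diagonal]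

theorem dotProduct_vecMul_self_of_isDiag_add_transpose {M : Matrix n n R}
    (hM : (M + Mᵀ).IsDiag) (u : n → R) : u ᵥ* M ⬝ᵥ u = ∑ i, M i i * u i ^ 2 := by
  classical
  have expand : u ᵥ* M ⬝ᵥ u = ∑ i, ∑ j, u i * M i j * u j := by
    simp only [dotProduct, vecMul, Finset.sum_mul]
    exact Finset.sum_comm
  have diag : ∑ i, M i i * u i ^ 2 = ∑ i, ∑ j, if i = j then M i i * u i ^ 2 else 0 := by
    simp
  rw [expand, diag, ← Fintype.sum_prod_type', ← Fintype.sum_prod_type', ← sub_eq_zero,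
    ← Finset.sum_sub_distrib]
  -- the terms at `(i, j)` and `(j, i)` cancel, and the diagonal terms vanish
  refine Finset.sum_involution (fun p _ => p.swap) ?_ ?_ (by simp) (by simp)
  · rintro ⟨i, j⟩ -
    by_cases hij : i = j
    · subst hij
      simp only [Prod.swap_prod_mk, if_true]
      ring
    · have hM' : M i j + M j i = 0 := hM hij
      simp only [Prod.swap_prod_mk, hij, Ne.symm hij, if_false]
      linear_combination u i * u j * hM'
  · rintro ⟨i, j⟩ - hne hfix
    obtain rfl : j = i := congrArg Prod.fst hfix
    simp only [if_true] at hne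
    exact hne (by ring)

end Bilinear

section QuadForm

variable {n R : Type*} [Fintype n] [CommRing R] [StarRing R]

def quadForm (A C D : Matrix n n R) (s : n → R) : R :=
  s ᵥ* A ⬝ᵥ star s + s ᵥ* C ⬝ᵥ s + star s ᵥ* D ⬝ᵥ star s

variable (A C D : Matrix n n R)

theorem quadForm_zero : quadForm A C D 0 = 0 := by
  simp [quadForm]

theorem quadForm_add (x y : n → R) :
    quadForm A C D (x + y) = quadForm A C D x + quadForm A C D y +
      (x ᵥ* A ⬝ᵥ star y + y ᵥ* A ⬝ᵥ star x + x ᵥ* (C + Cᵀ) ⬝ᵥ y +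
        star x ᵥ* (D + Dᵀ) ⬝ᵥ star y) := by
  simp only [quadForm, star_add, add_vecMul, vecMul_add, add_dotProduct, dotProduct_add,
    dotProduct_vecMul_transpose]
  ring

theorem quadForm_single_add_single [DecidableEq n] (p q : n) (a b : R) :
    quadForm A C D (Pi.single p a + Pi.single q b) =
      quadForm A C D (Pi.single p a) + quadForm A C D (Pi.single q b) +
        (a * A p q * star b + b * A q p * star a + a * b * (C + Cᵀ) p q +
          star a * star b * (D + Dᵀ) p q) := by
  rw [quadForm_add]
  simp only [single_vecMul, Pi.star_single, dotProduct_single, Pi.smul_apply, row_apply,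
    smul_eq_mul, Matrix.add_apply, transpose_apply]
  ring

theorem quadForm_eq_sum_of_isDiag (hA : A.IsDiag) (hC : (C + Cᵀ).IsDiag)
    (hD : (D + Dᵀ).IsDiag) (s : n → R) :
    quadForm A C D s =
      ∑ i, (A i i * s i * star (s i) + C i i * s i ^ 2 + D i i * star (s i) ^ 2) := by
  rw [quadForm, dotProduct_vecMul_of_isDiag hA, dotProduct_vecMul_self_of_isDiag_add_transpose hC,
    dotProduct_vecMul_self_of_isDiag_add_transpose hD, ← Finset.sum_add_distrib,
    ← Finset.sum_add_distrib]
  refine Finset.sum_congr rfl fun i _ => ?_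
  simp only [Pi.star_apply]
  ring

theorem quadForm_cross_eq_zero {g : n → R → R} (hg : ∀ s, quadForm A C D s = ∑ i, g i (s i))
    {p q : n} (hpq : p ≠ q) (a b : R) :
    a * A p q * star b + b * A q p * star a + a * b * (C + Cᵀ) p q +
      star a * star b * (D + Dᵀ) p q = 0 := by
  classical
  have hsep := Fintype.sum_apply_add_add_sum_apply_zero g (x := Pi.single p a)
    (y := Pi.single q b) fun i => by
      by_cases hi : i = p
      · exact Or.inr (by simp [hi, hpq])
      · exact Or.inl (by simp [hi])
  have h0 := hg 0
  have hab := hg (Pi.single p a + Pi.single q b)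
  simp only [Pi.zero_apply, quadForm_zero] at h0
  simp only [Pi.add_apply] at hab
  rw [← hab, ← hg (Pi.single p a), ← hg (Pi.single q b), ← h0, quadForm_single_add_single] at hsep
  linear_combination hsep

end QuadForm

theorem Complex.eq_zero_of_forall_cross_eq_zero {X Y c d : ℂ}
    (h : ∀ a b : ℂ, a * X * star b + b * Y * star a + a * b * c + star a * star b * d = 0) :
    X = 0 ∧ Y = 0 ∧ c = 0 ∧ d = 0 := by
  have h11 := h 1 1
  have h1I := h 1 I
  have hI1 := h I 1
  have hII := h I I
  simp only [star_one, Complex.star_def, Complex.conj_I] at h11 h1I hI1 hII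
  refine ⟨?_, ?_, ?_, ?_⟩
  · linear_combination (h11 + hII) / 4 + I * (h1I - hI1) / 4 + (3 * X - Y - c - d) / 4 * I_sq
  · linear_combination (h11 + hII) / 4 - I * (h1I - hI1) / 4 + (3 * Y - X - c - d) / 4 * I_sq
  · linear_combination (h11 - hII) / 4 - I * (h1I + hI1) / 4 + (3 * c - X - Y - d) / 4 * I_sq
  · linear_combination (h11 - hII) / 4 + I * (h1I + hI1) / 4 + (3 * d - X - Y - c) / 4 * I_sq

theorem statement0_general (N : ℕ) (A C D : Matrix (Fin N) (Fin N) ℂ) :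
    (∃ f : Fin N → ℝ → ℝ → ℂ, ∀ s : Fin N → ℂ,
      (Matrix.vecMul s A) ⬝ᵥ (fun n => starRingEnd ℂ (s n))
        + (Matrix.vecMul s C) ⬝ᵥ s
        + (Matrix.vecMul (fun n => starRingEnd ℂ (s n)) D) ⬝ᵥ (fun n => starRingEnd ℂ (s n))
        = ∑ n, f n (s n).re (s n).im) ↔
    (A.IsDiag ∧ (C + Cᵀ).IsDiag ∧ (D + Dᵀ).IsDiag) := by
  constructor
  · rintro ⟨f, hf⟩
    have hcross {p q : Fin N} (hpq : p ≠ q) :=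
      Complex.eq_zero_of_forall_cross_eq_zero
        (quadForm_cross_eq_zero A C D (g := fun i z => f i z.re z.im) hf hpq)
    exact ⟨fun p q hpq => (hcross hpq).1, fun p q hpq => (hcross hpq).2.2.1,
      fun p q hpq => (hcross hpq).2.2.2⟩
  · rintro ⟨hA, hC, hD⟩
    refine ⟨fun i x y => A i i * ⟨x, y⟩ * star ⟨x, y⟩ + C i i * ⟨x, y⟩ ^ 2
      + D i i * star ⟨x, y⟩ ^ 2, fun s => ?_⟩
    -- `⟨z.re, z.im⟩` is `z` by structure eta
    exact quadForm_eq_sum_of_isDiag A C D hA hC hD s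

/-- Lemma 2 of the paper. For `N × N` complex matrices `A, C, D`,
the quadratic form `s·A·sᴴ + s·C·sᵀ + s*·D·sᴴ` decomposes as a sum of single-symbol
functions `Σₙ fₙ(x_{nI}, x_{nQ})` for all row vectors `s` if and only if
`A`, `C + Cᵀ` and `D + Dᵀ` are all diagonal. -/
theorem statement0 (N : ℕ) (hN : 0 < N) (A C D : Matrix (Fin N) (Fin N) ℂ) :
    (∃ f : Fin N → ℝ → ℝ → ℂ, ∀ s : Fin N → ℂ,
      (Matrix.vecMul s A) ⬝ᵥ (fun n => starRingEnd ℂ (s n))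
        + (Matrix.vecMul s C) ⬝ᵥ s
        + (Matrix.vecMul (fun n => starRingEnd ℂ (s n)) D) ⬝ᵥ (fun n => starRingEnd ℂ (s n))
        = ∑ n, f n (s n).re (s n).im) ↔
    (A.IsDiag ∧ (C + Cᵀ).IsDiag ∧ (D + Dᵀ).IsDiag) :=
  statement0_general N A C D
end

section
/- Let N, T be positive integers and let A, B be N×T complex matrices. Suppose that for every column index t ∈ {1,…,T} there is a fixed expression — either 0, or ε·h·v_n, or ε·conj(h)·conj(v_n), for some ε ∈ {1, −1, i, −i} and some n ∈ {1,…,N} — such that for all h ∈ ℂ and all row vectors v ∈ ℂ^{1×N}, the t-th entry of h·(v·A) + conj(h)·(v*·B) equals that expression. Then: (1) every entry of A and of B belongs to {0, 1, −1, i, −i}; (2) A and B have no nonzero entry in the same position; (3) each of A, B, and A + B is column monomial, i.e., has at most one nonzero entry in every column. (This is the paper's Lemma 1: the relay matrices A_k, B_k of a PDSSDC satisfy these conditions.) -/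
/-!
The `t`-th entry of `h · (v A) + conj h · (conj v B)` is `h · (v ⬝ a) + conj h · (conj v ⬝ b)`
for the `t`-th columns `a`, `b` of `A`, `B`, and as a function of `h`, `v` it determines `a` and `b`:
testing `v = eᵢ` with `h = 1` and `h = i` recovers `aᵢ + bᵢ` and `aᵢ - bᵢ`. Each of the three
permitted shapes of the entry is itself of this form, with `(a, b)` equal to `(0, 0)`,
`(ε eₙ, 0)` or `(0, ε eₙ)`, and all claimed properties are read off these three column pairs.
-/

open Matrix

def Matrix.ColMonomial {m n : Type*} (M : Matrix m n ℂ) : Prop :=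
  ∀ j i i', M i j ≠ 0 → M i' j ≠ 0 → i = i'

open ComplexConjugate Function

theorem Complex.eq_and_eq_of_forall_mul_add_conj_mul {a b c d : ℂ}
    (h : ∀ z : ℂ, z * a + conj z * b = z * c + conj z * d) : a = c ∧ b = d := by
  have h1 := h 1
  have hI := h Complex.I
  simp only [map_one, one_mul, Complex.conj_I] at h1 hI
  have hsub : a - b = c - d := mul_left_cancel₀ Complex.I_ne_zero (by linear_combination hI)
  exact ⟨by linear_combination (h1 + hsub) / 2, by linear_combination (h1 - hsub) / 2⟩

theorem eq_and_eq_of_forall_mul_dotProduct_add_conj_mul {ι : Type*} [Fintype ι] [DecidableEq ι]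
    {a b c d : ι → ℂ}
    (h : ∀ (z : ℂ) (v : ι → ℂ),
      z * (v ⬝ᵥ a) + conj z * ((fun n => conj (v n)) ⬝ᵥ b)
        = z * (v ⬝ᵥ c) + conj z * ((fun n => conj (v n)) ⬝ᵥ d)) :
    a = c ∧ b = d := by
  have hconj (i : ι) : (fun n => conj ((Pi.single i 1 : ι → ℂ) n)) = Pi.single i 1 := by
    ext n
    simp [Pi.single_apply, apply_ite conj]
  have hentry : ∀ i, a i = c i ∧ b i = d i := fun i =>
    Complex.eq_and_eq_of_forall_mul_add_conj_mul fun z => by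
      simpa only [hconj, single_one_dotProduct] using h z (Pi.single i 1)
  exact ⟨funext fun i => (hentry i).1, funext fun i => (hentry i).2⟩

section OneSidedSingle

variable {ι M : Type*} [DecidableEq ι] [AddZeroClass M]

def IsOneSidedSingle (s : Set M) (a b : ι → M) : Prop :=
  (a = 0 ∧ b = 0) ∨
    ∃ ε ∈ s, ∃ n : ι, (a = Pi.single n ε ∧ b = 0) ∨ (a = 0 ∧ b = Pi.single n ε)

namespace IsOneSidedSingle

variable {s : Set M} {a b : ι → M}

theorem apply_mem_insert_zero (h : IsOneSidedSingle s a b) (i : ι) :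
    a i ∈ insert 0 s ∧ b i ∈ insert 0 s := by
  have single_mem : ∀ {ε} (n : ι), ε ∈ s → (Pi.single n ε : ι → M) i ∈ insert 0 s := fun n hε => by
    rw [Pi.single_apply]
    split
    exacts [Set.mem_insert_of_mem _ hε, Set.mem_insert _ _]
  rcases h with ⟨rfl, rfl⟩ | ⟨ε, hε, n, ⟨rfl, rfl⟩ | ⟨rfl, rfl⟩⟩
  exacts [⟨Set.mem_insert _ _, Set.mem_insert _ _⟩, ⟨single_mem n hε, Set.mem_insert _ _⟩,
    ⟨Set.mem_insert _ _, single_mem n hε⟩]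

theorem eq_zero_or_eq_zero (h : IsOneSidedSingle s a b) (i : ι) : a i = 0 ∨ b i = 0 := by
  rcases h with ⟨rfl, -⟩ | ⟨ε, -, n, ⟨-, rfl⟩ | ⟨rfl, -⟩⟩ <;> simp

theorem support_subsingleton (h : IsOneSidedSingle s a b) :
    (support a).Subsingleton ∧ (support b).Subsingleton ∧ (support (a + b)).Subsingleton := by
  rcases h with ⟨rfl, rfl⟩ | ⟨ε, -, n, ⟨rfl, rfl⟩ | ⟨rfl, rfl⟩⟩ <;>
    simp [Pi.subsingleton_support_single]

end IsOneSidedSingle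

end OneSidedSingle

theorem Matrix.colMonomial_of_support_subsingleton {m n : Type*} {M : Matrix m n ℂ}
    (h : ∀ j, (support fun i => M i j).Subsingleton) : M.ColMonomial :=
  fun j _ _ hi hi' => h j hi hi'

theorem isOneSidedSingle_of_forall {ι : Type*} [Fintype ι] [DecidableEq ι] {s : Set ℂ}
    {a b : ι → ℂ}
    (hyp : (∀ (h : ℂ) (v : ι → ℂ), h * (v ⬝ᵥ a) + conj h * ((fun n => conj (v n)) ⬝ᵥ b) = 0) ∨
      ∃ ε ∈ s, ∃ n : ι,
        (∀ (h : ℂ) (v : ι → ℂ),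
          h * (v ⬝ᵥ a) + conj h * ((fun n => conj (v n)) ⬝ᵥ b) = ε * h * v n) ∨
        (∀ (h : ℂ) (v : ι → ℂ),
          h * (v ⬝ᵥ a) + conj h * ((fun n => conj (v n)) ⬝ᵥ b) = ε * conj h * conj (v n))) :
    IsOneSidedSingle s a b := by
  rcases hyp with hzero | ⟨ε, hε, n, hlin | hanti⟩
  · exact Or.inl <| eq_and_eq_of_forall_mul_dotProduct_add_conj_mul fun z v => by
      simp [hzero]
  · refine Or.inr ⟨ε, hε, n, Or.inl <| eq_and_eq_of_forall_mul_dotProduct_add_conj_mul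
      fun z v => ?_⟩
    rw [hlin, dotProduct_single, dotProduct_zero]
    ring
  · refine Or.inr ⟨ε, hε, n, Or.inr <| eq_and_eq_of_forall_mul_dotProduct_add_conj_mul
      fun z v => ?_⟩
    rw [hanti, dotProduct_single, dotProduct_zero]
    ring

theorem statement1_general (N T : ℕ)
    (A B : Matrix (Fin N) (Fin T) ℂ)
    (hyp : ∀ t : Fin T,
      (∀ (h : ℂ) (v : Fin N → ℂ),
        h * Matrix.vecMul v A t
          + starRingEnd ℂ h * Matrix.vecMul (fun n => starRingEnd ℂ (v n)) B t = 0) ∨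
      ∃ ε ∈ ({1, -1, Complex.I, -Complex.I} : Set ℂ), ∃ n : Fin N,
        (∀ (h : ℂ) (v : Fin N → ℂ),
          h * Matrix.vecMul v A t
            + starRingEnd ℂ h * Matrix.vecMul (fun n => starRingEnd ℂ (v n)) B t
            = ε * h * v n) ∨
        (∀ (h : ℂ) (v : Fin N → ℂ),
          h * Matrix.vecMul v A t
            + starRingEnd ℂ h * Matrix.vecMul (fun n => starRingEnd ℂ (v n)) B t
            = ε * starRingEnd ℂ h * starRingEnd ℂ (v n))) :
    (∀ (i : Fin N) (t : Fin T),
        A i t ∈ ({0, 1, -1, Complex.I, -Complex.I} : Set ℂ) ∧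
        B i t ∈ ({0, 1, -1, Complex.I, -Complex.I} : Set ℂ)) ∧
    (∀ (i : Fin N) (t : Fin T), ¬(A i t ≠ 0 ∧ B i t ≠ 0)) ∧
    A.ColMonomial ∧ B.ColMonomial ∧ (A + B).ColMonomial := by
  have column (t : Fin T) : IsOneSidedSingle ({1, -1, Complex.I, -Complex.I} : Set ℂ)
      (fun i => A i t) (fun i => B i t) :=
    isOneSidedSingle_of_forall (hyp t)
  refine ⟨fun i t => (column t).apply_mem_insert_zero i,
    fun i t ⟨hA, hB⟩ => ((column t).eq_zero_or_eq_zero i).elim hA hB,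
    colMonomial_of_support_subsingleton fun t => (column t).support_subsingleton.1,
    colMonomial_of_support_subsingleton fun t => (column t).support_subsingleton.2.1,
    colMonomial_of_support_subsingleton fun t => (column t).support_subsingleton.2.2⟩

/-- Lemma 1 of the paper. If every entry of the row
`h·(v·A) + conj(h)·(v*·B)` is identically `0`, `ε·h·vₙ` or `ε·conj(h)·conj(vₙ)` for some
`ε ∈ {1, −1, i, −i}` and some `n`, then the entries of `A` and `B` lie in `{0, 1, −1, i, −i}`,
`A` and `B` have no nonzero entry at the same position, and `A`, `B` and `A + B` are
column monomial. -/
theorem statement1 (N T : ℕ) (hN : 0 < N) (hT : 0 < T)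
    (A B : Matrix (Fin N) (Fin T) ℂ)
    (hyp : ∀ t : Fin T,
      (∀ (h : ℂ) (v : Fin N → ℂ),
        h * Matrix.vecMul v A t
          + starRingEnd ℂ h * Matrix.vecMul (fun n => starRingEnd ℂ (v n)) B t = 0) ∨
      ∃ ε ∈ ({1, -1, Complex.I, -Complex.I} : Set ℂ), ∃ n : Fin N,
        (∀ (h : ℂ) (v : Fin N → ℂ),
          h * Matrix.vecMul v A t
            + starRingEnd ℂ h * Matrix.vecMul (fun n => starRingEnd ℂ (v n)) B t
            = ε * h * v n) ∨
        (∀ (h : ℂ) (v : Fin N → ℂ),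
          h * Matrix.vecMul v A t
            + starRingEnd ℂ h * Matrix.vecMul (fun n => starRingEnd ℂ (v n)) B t
            = ε * starRingEnd ℂ h * starRingEnd ℂ (v n))) :
    (∀ (i : Fin N) (t : Fin T),
        A i t ∈ ({0, 1, -1, Complex.I, -Complex.I} : Set ℂ) ∧
        B i t ∈ ({0, 1, -1, Complex.I, -Complex.I} : Set ℂ)) ∧
    (∀ (i : Fin N) (t : Fin T), ¬(A i t ≠ 0 ∧ B i t ≠ 0)) ∧
    A.ColMonomial ∧ B.ColMonomial ∧ (A + B).ColMonomial :=
  statement1_general N T A B hyp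
end

section
/- Suppose the code is a unitary RS-PDSSDC and let k ≠ k' be indices in {1,…,K} such that rows k and k' are R-orthogonal. Then A_k·A_{k'}ᴴ = 0 and B_k*·B_{k'}ᵀ = 0, i.e., A_k and A_{k'} have no nonzero entries in the same column, and likewise B_k and B_{k'}. -/
open Matrix

noncomputable section

/-- A distributed code for `K` relays, with `N` information symbols and block length `T`:
precoding matrices `P, Q` used at the source, relay matrices `A k, B k` used at relay `k`,
and the noise-power constant `c > 0` entering the covariance matrix `R`. -/
structure DistCode (N T K : ℕ) where
  c : ℝ
  hc : 0 < c
  P : Matrix (Fin N) (Fin N) ℂ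
  Q : Matrix (Fin N) (Fin N) ℂ
  A : Fin K → Matrix (Fin N) (Fin T) ℂ
  B : Fin K → Matrix (Fin N) (Fin T) ℂ

/-- Entrywise complex conjugate of a matrix (`M*`). -/
def Matrix.cstar {m n : Type*} (M : Matrix m n ℂ) : Matrix m n ℂ :=
  M.map (starRingEnd ℂ)

namespace DistCode

variable {N T K : ℕ}

/-- The precoded vector `s̃ = s·P + s*·Q`. -/
def stilde (C : DistCode N T K) (s : Fin N → ℂ) : Fin N → ℂ :=
  Matrix.vecMul s C.P + Matrix.vecMul (fun n => starRingEnd ℂ (s n)) C.Q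

/-- The codeword `X(h, s)`: its `k`-th row is `h_k·(s̃·A_k) + conj(h_k)·(s̃*·B_k)`. -/
def codeword (C : DistCode N T K) (h : Fin K → ℂ) (s : Fin N → ℂ) :
    Matrix (Fin K) (Fin T) ℂ := fun k t =>
  h k * Matrix.vecMul (C.stilde s) (C.A k) t +
    starRingEnd ℂ (h k) * Matrix.vecMul (fun n => starRingEnd ℂ (C.stilde s n)) (C.B k) t

/-- The noise covariance matrix `R(g) = c·(Σ_k |g_k|²·(A_kᴴA_k + B_kᴴB_k)) + I_T`. -/
def Rmat (C : DistCode N T K) (g : Fin K → ℂ) : Matrix (Fin T) (Fin T) ℂ :=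
  (C.c : ℂ) • (∑ k, (Complex.normSq (g k) : ℂ) •
    ((C.A k)ᴴ * C.A k + (C.B k)ᴴ * C.B k)) + 1

/-- The (whitened) Gram matrix `X(h,s)·R(g)⁻¹·X(h,s)ᴴ`. -/
def gram (C : DistCode N T K) (g h : Fin K → ℂ) (s : Fin N → ℂ) :
    Matrix (Fin K) (Fin K) ℂ :=
  C.codeword h s * (C.Rmat g)⁻¹ * (C.codeword h s)ᴴ

/-- Condition (a) of the PDSSDC definition: each entry of the codeword is identically `0`,
`ε·h_k·s̃_n` or `ε·conj(h_k)·conj(s̃_n)` for some `ε ∈ {1, −1, i, −i}` and some `n`. -/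
def CondA (C : DistCode N T K) : Prop :=
  ∀ (k : Fin K) (t : Fin T),
    (∀ h s, C.codeword h s k t = 0) ∨
    ∃ ε ∈ ({1, -1, Complex.I, -Complex.I} : Set ℂ), ∃ n : Fin N,
      (∀ h s, C.codeword h s k t = ε * h k * C.stilde s n) ∨
      (∀ h s, C.codeword h s k t =
        ε * starRingEnd ℂ (h k) * starRingEnd ℂ (C.stilde s n))

/-- Condition (b) of the PDSSDC definition: for every `g` the Gram matrix decomposes as
`Σ_n W_n(x_{nI}, x_{nQ}, h)` where the `(k,k)` entry of `W_n` is
`|h_k|²·(v¹_{n,k}·x_{nI}² + v²_{n,k}·x_{nQ}²)`. -/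
def CondB (C : DistCode N T K) : Prop :=
  ∀ g : Fin K → ℂ,
    ∃ W : Fin N → ℝ → ℝ → (Fin K → ℂ) → Matrix (Fin K) (Fin K) ℂ,
    ∃ v1 v2 : Fin N → Fin K → ℝ,
      ∀ (h : Fin K → ℂ) (s : Fin N → ℂ),
        C.gram g h s = (∑ n, W n (s n).re (s n).im h) ∧
        ∀ (n : Fin N) (k : Fin K),
          W n (s n).re (s n).im h k k =
            ((Complex.normSq (h k) *
              (v1 n k * (s n).re ^ 2 + v2 n k * (s n).im ^ 2) : ℝ) : ℂ)

/-- A Precoded Distributed Single-Symbol Decodable STBC. -/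
def IsPDSSDC (C : DistCode N T K) : Prop := C.CondA ∧ C.CondB

/-- Rows `k` and `k'` are `R`-non-orthogonal if the `(k,k')` entry of the Gram matrix is not
identically zero as a function of `(g, h, s)`. -/
def RNonOrth (C : DistCode N T K) (k k' : Fin K) : Prop :=
  ¬ ∀ g h s, C.gram g h s k k' = 0

/-- Semi-orthogonality: every row is `R`-non-orthogonal to at most one other row. -/
def SemiOrth (C : DistCode N T K) : Prop :=
  ∀ k k₁ k₂ : Fin K, k₁ ≠ k → k₂ ≠ k →
    C.RNonOrth k k₁ → C.RNonOrth k k₂ → k₁ = k₂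

end DistCode

/-- A matrix is row monomial if every row has at most one nonzero entry. -/
def Matrix.RowMonomial {m n : Type*} (M : Matrix m n ℂ) : Prop :=
  ∀ i j j', M i j ≠ 0 → M i j' ≠ 0 → j = j'

namespace DistCode

variable {N T K : ℕ}

/-- Row monomial code: each relay matrix `A_k`, `B_k` is row monomial. -/
def RowMonomialCode (C : DistCode N T K) : Prop :=
  ∀ k, (C.A k).RowMonomial ∧ (C.B k).RowMonomial

/-- The weight matrix of `x_{nI}`: `Φ_{nI}(h) = X(h, eₙ)`. -/
def PhiI (C : DistCode N T K) (n : Fin N) (h : Fin K → ℂ) : Matrix (Fin K) (Fin T) ℂ :=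
  C.codeword h (Pi.single n 1)

/-- The weight matrix of `x_{nQ}`: `Φ_{nQ}(h) = X(h, i·eₙ)`. -/
def PhiQ (C : DistCode N T K) (n : Fin N) (h : Fin K → ℂ) : Matrix (Fin K) (Fin T) ℂ :=
  C.codeword h (Pi.single n Complex.I)

/-- Unitary code: for every channel vector `h` with nonzero entries, the matrices
`Φ_{nI}(h)·Φ_{nI}(h)ᴴ` and `Φ_{nQ}(h)·Φ_{nQ}(h)ᴴ` are diagonal with strictly positive
(real) diagonal entries. -/
def Unitary (C : DistCode N T K) : Prop :=
  ∀ h : Fin K → ℂ, (∀ k, h k ≠ 0) → ∀ n : Fin N,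
    ((C.PhiI n h * (C.PhiI n h)ᴴ).IsDiag ∧
      ∀ k, 0 < ((C.PhiI n h * (C.PhiI n h)ᴴ) k k).re ∧
        ((C.PhiI n h * (C.PhiI n h)ᴴ) k k).im = 0) ∧
    ((C.PhiQ n h * (C.PhiQ n h)ᴴ).IsDiag ∧
      ∀ k, 0 < ((C.PhiQ n h * (C.PhiQ n h)ᴴ) k k).re ∧
        ((C.PhiQ n h * (C.PhiQ n h)ᴴ) k k).im = 0)

/-- A unitary row-monomial semi-orthogonal PDSSDC (unitary RS-PDSSDC). -/
def IsUnitaryRSPDSSDC (C : DistCode N T K) : Prop :=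
  C.IsPDSSDC ∧ C.SemiOrth ∧ C.RowMonomialCode ∧ C.Unitary

end DistCode

/-! Put `g = 0`, so that `R = I` and the Gram matrix is `X Xᴴ`. By condition (b) the diagonal
entry `(X Xᴴ)_kk` at `h = 1` is `Σ_n (v¹_{n,k} x_{nI}² + v²_{n,k} x_{nQ}²)`, and unitarity makes all
these weights positive, so `s ↦ s̃` is an injective, hence surjective, `ℝ`-linear map.
`R`-orthogonality of rows `k, k'` says `Σ_t X_kt conj(X_k't) = 0`; as `h_k` and `h_k'` vary
independently, the `A`-part and the `B`-part of this sum vanish separately, for every `s̃` and so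
for every vector. Polarization then gives `A_k A_k'ᴴ = 0 = B_k B_k'ᴴ`; as row `i` of `A_k` has
a single nonzero entry `A_k(i,t)`, the `(i,i')` entry of `A_k A_k'ᴴ` is `A_k(i,t) conj(A_k'(i',t))`,
and likewise for `B`. -/

theorem eq_zero_of_mul_sq_add_mul_sq_eq_zero {a b x y : ℝ} (ha : 0 < a) (hb : 0 < b)
    (h : a * x ^ 2 + b * y ^ 2 = 0) : x = 0 ∧ y = 0 := by
  obtain ⟨hx, hy⟩ := (add_eq_zero_iff_of_nonneg (mul_nonneg ha.le (sq_nonneg x))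
    (mul_nonneg hb.le (sq_nonneg y))).mp h
  exact ⟨pow_eq_zero_iff two_ne_zero |>.mp ((mul_eq_zero.mp hx).resolve_left ha.ne'),
    pow_eq_zero_iff two_ne_zero |>.mp ((mul_eq_zero.mp hy).resolve_left hb.ne')⟩

namespace Matrix

variable {m n : Type*}

theorem eq_zero_of_forall_star_dotProduct_mulVec_self [Fintype n] [DecidableEq n]
    {G : Matrix n n ℂ} (hG : ∀ x, star x ⬝ᵥ G *ᵥ x = 0) : G = 0 := by
  have hT : toEuclideanLin G = 0 := by
    refine (inner_map_self_eq_zero _).mp fun x => ?_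
    rw [← inner_conj_symm, EuclideanSpace.inner_eq_star_dotProduct, ofLp_toLpLin,
      toLin'_apply, dotProduct_comm, hG, map_zero]
  exact toEuclideanLin.map_eq_zero_iff.mp hT

theorem mul_conjTranspose_eq_zero_of_forall_vecMul [Fintype m] [Fintype n] [DecidableEq m]
    {M M' : Matrix m n ℂ}
    (h : ∀ w, (w ᵥ* M) ⬝ᵥ star (w ᵥ* M') = 0) : M * M'ᴴ = 0 := by
  refine eq_zero_of_forall_star_dotProduct_mulVec_self fun x => ?_
  have := h (star x)
  rwa [star_vecMul, ← dotProduct_mulVec, dotProduct_comm, star_star, mulVec_mulVec,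
    dotProduct_comm] at this

theorem RowMonomial.eq_zero_of_ne {M : Matrix m n ℂ} (hM : M.RowMonomial) {i : m} {t u : n}
    (hi : M i t ≠ 0) (hu : u ≠ t) : M i u = 0 := by
  by_contra hne
  exact hu (hM i u t hne hi)

theorem RowMonomial.apply_eq_zero_of_mul_conjTranspose_eq_zero [Fintype n]
    {M M' : Matrix m n ℂ} (hM : M.RowMonomial) (h : M * M'ᴴ = 0) {i i' : m} {t : n}
    (hi : M i t ≠ 0) : M' i' t = 0 := by
  have hii' := congrFun (congrFun h i) i'
  rw [mul_apply, Finset.sum_eq_single t] at hii'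
  · simpa [hi] using hii'
  · intro u _ hu
    rw [hM.eq_zero_of_ne hi hu, zero_mul]
  · simp

theorem cstar_mul_transpose [Fintype n] {l : Type*} (M : Matrix m n ℂ) (M' : Matrix l n ℂ) :
    M.cstar * M'ᵀ = (M * M'ᴴ).cstar := by
  ext i j
  simp [cstar, mul_apply]

end Matrix

-- The four pairings are the coefficients of a polynomial in `u, ū, v, v̄`;
-- the choices `u, v ∈ {1, i}` separate them.
theorem Complex.dotProduct_star_eq_zero_of_forall {ι : Type*} [Fintype ι] {a b a' b' : ι → ℂ}
    (H : ∀ u v : ℂ, (u • a + star u • b) ⬝ᵥ star (v • a' + star v • b') = 0) :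
    a ⬝ᵥ star a' = 0 ∧ b ⬝ᵥ star b' = 0 := by
  have key (u v : ℂ) : u * star v * (a ⬝ᵥ star a') + u * v * (a ⬝ᵥ star b')
      + star u * star v * (b ⬝ᵥ star a') + star u * v * (b ⬝ᵥ star b') = 0 := by
    rw [← H u v]
    simp only [star_add, star_smul, star_star, add_dotProduct, dotProduct_add, smul_dotProduct,
      dotProduct_smul, smul_eq_mul]
    ring
  set p := a ⬝ᵥ star a'
  set q := a ⬝ᵥ star b'
  set r := b ⬝ᵥ star a'
  set w := b ⬝ᵥ star b'
  have e11 := key 1 1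
  have eI1 := key Complex.I 1
  have e1I := key 1 Complex.I
  have eII := key Complex.I Complex.I
  simp only [star_one, Complex.star_def, Complex.conj_I] at e11 eI1 e1I eII
  constructor
  · linear_combination (1 / 4 : ℂ) * e11 - (Complex.I / 4) * eI1 + (Complex.I / 4) * e1I
      + (1 / 4 : ℂ) * eII + ((3 / 4 : ℂ) * p - (1 / 4 : ℂ) * (q + r + w)) * Complex.I_sq
  · linear_combination (1 / 4 : ℂ) * e11 + (Complex.I / 4) * eI1 - (Complex.I / 4) * e1I
      + (1 / 4 : ℂ) * eII + ((3 / 4 : ℂ) * w - (1 / 4 : ℂ) * (p + q + r)) * Complex.I_sq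

namespace DistCode

variable {N T K : ℕ} (C : DistCode N T K)

theorem stilde_eq (s : Fin N → ℂ) : C.stilde s = s ᵥ* C.P + star s ᵥ* C.Q :=
  rfl

theorem codeword_apply (h : Fin K → ℂ) (s : Fin N → ℂ) (k : Fin K) :
    C.codeword h s k =
      h k • (C.stilde s ᵥ* C.A k) + star (h k) • (star (C.stilde s) ᵥ* C.B k) :=
  rfl

theorem Rmat_zero : C.Rmat 0 = 1 := by
  simp [Rmat]

theorem gram_zero (h : Fin K → ℂ) (s : Fin N → ℂ) :
    C.gram 0 h s = C.codeword h s * (C.codeword h s)ᴴ := by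
  rw [gram, Rmat_zero, inv_one, Matrix.mul_one]

theorem gram_zero_apply (h : Fin K → ℂ) (s : Fin N → ℂ) (k k' : Fin K) :
    C.gram 0 h s k k' = C.codeword h s k ⬝ᵥ star (C.codeword h s k') := by
  rw [gram_zero, mul_apply']
  rfl

def stildeLinearMap : (Fin N → ℂ) →ₗ[ℝ] (Fin N → ℂ) where
  toFun := C.stilde
  map_add' s s' := by
    simp only [stilde_eq, star_add, add_vecMul]
    abel
  map_smul' r s := by
    simp only [stilde_eq, star_smul, star_trivial, smul_vecMul, RingHom.id_apply, smul_add]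

variable {C}

theorem CondB.exists_gram_diag (hB : C.CondB) (g : Fin K → ℂ) :
    ∃ v1 v2 : Fin N → Fin K → ℝ, ∀ h s k, C.gram g h s k k = ((Complex.normSq (h k) *
      ∑ n, (v1 n k * (s n).re ^ 2 + v2 n k * (s n).im ^ 2) : ℝ) : ℂ) := by
  obtain ⟨W, v1, v2, hW⟩ := hB g
  refine ⟨v1, v2, fun h s k => ?_⟩
  rw [(hW h s).1, Matrix.sum_apply, Finset.mul_sum]
  push_cast
  exact Finset.sum_congr rfl fun n _ => by rw [(hW h s).2]; push_cast; ring

theorem stilde_injective (hB : C.CondB) (hU : C.Unitary) (k : Fin K) :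
    Function.Injective C.stilde := by
  obtain ⟨v1, v2, hv⟩ := hB.exists_gram_diag 0
  have hdiag (s : Fin N → ℂ) : C.gram 0 1 s k k =
      ((∑ n, (v1 n k * (s n).re ^ 2 + v2 n k * (s n).im ^ 2) : ℝ) : ℂ) := by
    simpa using hv 1 s k
  have hsingle (n : Fin N) (z : ℂ) : C.gram 0 1 (Pi.single n z) k k =
      ((v1 n k * z.re ^ 2 + v2 n k * z.im ^ 2 : ℝ) : ℂ) := by
    rw [hdiag, Fintype.sum_eq_single n fun m hm => by simp [Pi.single_eq_of_ne hm]]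
    simp
  have hv1 (n : Fin N) : 0 < v1 n k := by
    have := ((hU 1 (fun _ => one_ne_zero) n).1.2 k).1
    rw [PhiI, ← gram_zero, hsingle] at this
    simpa using this
  have hv2 (n : Fin N) : 0 < v2 n k := by
    have := ((hU 1 (fun _ => one_ne_zero) n).2.2 k).1
    rw [PhiQ, ← gram_zero, hsingle] at this
    simpa using this
  refine (injective_iff_map_eq_zero C.stildeLinearMap).mpr fun s hs => ?_
  have hX : C.codeword 1 s = 0 := by
    ext k t
    simp [codeword_apply, show C.stilde s = 0 from hs]
  have hsum : ∑ n, (v1 n k * (s n).re ^ 2 + v2 n k * (s n).im ^ 2) = 0 := by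
    have := hdiag s
    rw [gram_zero, hX, Matrix.zero_mul, Matrix.zero_apply] at this
    exact_mod_cast this.symm
  have hterm (n : Fin N) : 0 ≤ v1 n k * (s n).re ^ 2 + v2 n k * (s n).im ^ 2 :=
    add_nonneg (mul_nonneg (hv1 n).le (sq_nonneg _)) (mul_nonneg (hv2 n).le (sq_nonneg _))
  rw [Finset.sum_eq_zero_iff_of_nonneg fun n _ => hterm n] at hsum
  funext n
  obtain ⟨hre, him⟩ :=
    eq_zero_of_mul_sq_add_mul_sq_eq_zero (hv1 n) (hv2 n) (hsum n (Finset.mem_univ n))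
  exact Complex.ext hre him

theorem stilde_surjective (hB : C.CondB) (hU : C.Unitary) (k : Fin K) :
    Function.Surjective C.stilde :=
  (LinearMap.injective_iff_surjective (f := C.stildeLinearMap)).mp (stilde_injective hB hU k)

theorem vecMul_dotProduct_star_eq_zero_of_gram {k k' : Fin K} (hkk : k ≠ k')
    (horth : ∀ h s, C.gram 0 h s k k' = 0) (s : Fin N → ℂ) :
    (C.stilde s ᵥ* C.A k) ⬝ᵥ star (C.stilde s ᵥ* C.A k') = 0 ∧
      (star (C.stilde s) ᵥ* C.B k) ⬝ᵥ star (star (C.stilde s) ᵥ* C.B k') = 0 :=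
  Complex.dotProduct_star_eq_zero_of_forall fun u v => by
    have := horth (fun j => if j = k then u else v) s
    rwa [gram_zero_apply, codeword_apply, codeword_apply, if_pos rfl,
      if_neg hkk.symm] at this

end DistCode

theorem statement11_general {N T K : ℕ}
    (C : DistCode N T K) (hC : C.IsUnitaryRSPDSSDC)
    (k k' : Fin K) (hkk : k ≠ k') (horth : ¬ C.RNonOrth k k') :
    C.A k * (C.A k')ᴴ = 0 ∧ (C.B k).cstar * (C.B k')ᵀ = 0 ∧
    (∀ (t : Fin T) (i i' : Fin N), C.A k i t ≠ 0 → C.A k' i' t = 0) ∧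
    (∀ (t : Fin T) (i i' : Fin N), C.B k i t ≠ 0 → C.B k' i' t = 0) := by
  obtain ⟨⟨-, hcondB⟩, -, hmono, hU⟩ := hC
  have hsurj := DistCode.stilde_surjective hcondB hU k
  have hgram : ∀ h s, C.gram 0 h s k k' = 0 := fun h s => not_not.mp horth 0 h s
  have hAk : C.A k * (C.A k')ᴴ = 0 := mul_conjTranspose_eq_zero_of_forall_vecMul fun w => by
    obtain ⟨s, rfl⟩ := hsurj w
    exact (DistCode.vecMul_dotProduct_star_eq_zero_of_gram hkk hgram s).1
  have hBk : C.B k * (C.B k')ᴴ = 0 := mul_conjTranspose_eq_zero_of_forall_vecMul fun w => by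
    obtain ⟨s, hs⟩ := hsurj (star w)
    simpa [hs] using (DistCode.vecMul_dotProduct_star_eq_zero_of_gram hkk hgram s).2
  refine ⟨hAk, ?_, fun t i i' => (hmono k).1.apply_eq_zero_of_mul_conjTranspose_eq_zero hAk,
    fun t i i' => (hmono k).2.apply_eq_zero_of_mul_conjTranspose_eq_zero hBk⟩
  rw [cstar_mul_transpose, hBk]
  simp [cstar]

/-- Lemma 3 of the paper, adapted. For a unitary RS-PDSSDC with
`R`-orthogonal rows `k ≠ k'`, we have `A_k·A_{k'}ᴴ = 0` and `B_k*·B_{k'}ᵀ = 0`; equivalently,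
`A_k` and `A_{k'}` have no nonzero entries in the same column, and likewise `B_k`, `B_{k'}`. -/
theorem statement11 {N T K : ℕ} (hN : 0 < N) (hT : 0 < T) (hK : 0 < K)
    (C : DistCode N T K) (hC : C.IsUnitaryRSPDSSDC)
    (k k' : Fin K) (hkk : k ≠ k') (horth : ¬ C.RNonOrth k k') :
    C.A k * (C.A k')ᴴ = 0 ∧ (C.B k).cstar * (C.B k')ᵀ = 0 ∧
    (∀ (t : Fin T) (i i' : Fin N), C.A k i t ≠ 0 → C.A k' i' t = 0) ∧
    (∀ (t : Fin T) (i i' : Fin N), C.B k i t ≠ 0 → C.B k' i' t = 0) :=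
  statement11_general C hC k k' hkk horth
end
end

section
/- For all h = (h_1,h_2,h_3,h_4) ∈ ℂ⁴ and all x = (x_1,x_2,x_3,x_4) ∈ ℂ⁴, let x̃_1 = x_{1I} + i·x_{3Q}, x̃_2 = x_{2I} + i·x_{4Q}, x̃_3 = x_{3I} + i·x_{1Q}, x̃_4 = x_{4I} + i·x_{2Q}, and let X be the 4×4 complex matrix with rows: row 1 = (h_1·x̃_1, h_1·x̃_2, 0, 0); row 2 = (−conj(h_2)·conj(x̃_2), conj(h_2)·conj(x̃_1), 0, 0); row 3 = (0, 0, h_3·x̃_3, h_3·x̃_4); row 4 = (0, 0, −conj(h_4)·conj(x̃_4), conj(h_4)·conj(x̃_3)). Then X·Xᴴ is the diagonal matrix diag(|h_1|²·d₁, |h_2|²·d₁, |h_3|²·d₂, |h_4|²·d₂), where d₁ = x_{1I}² + x_{2I}² + x_{3Q}² + x_{4Q}² and d₂ = x_{1Q}² + x_{2Q}² + x_{3I}² + x_{4I}². In particular every entry of X·Xᴴ is a sum of terms each depending on the real and imaginary parts of a single symbol x_n, so this code (the precoded coordinate-interleaved orthogonal design X_PCIOD) is single-symbol decodable; it is a non-unitary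 PDSSDC since, e.g., the coefficient of x_{1I}² in the (3,3) and (4,4) entries is zero. -/
/-!
Up to the reindexing `Fin 4 ≃ Fin 2 ⊕ Fin 2`, `X` is block diagonal with two Alamouti-type blocks
`[[h a, h b], [-conj(g) conj b, conj(g) conj a]]`. The rows of such a block are orthogonal, since
`h a · (-g b) + h b · (g a) = 0`, so its Gram matrix is `diag(|h|², |g|²) · (|a|² + |b|²)`.
Coordinate interleaving makes `|x̃₁|² + |x̃₂|²` and `|x̃₃|² + |x̃₄|²` exactly `d₁` and `d₂`.
-/

open Matrix

noncomputable section

/-- The coordinate-interleaved symbols of the PCIOD construction: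
`x̃₁ = x_{1I} + i·x_{3Q}`, `x̃₂ = x_{2I} + i·x_{4Q}`,
`x̃₃ = x_{3I} + i·x_{1Q}`, `x̃₄ = x_{4I} + i·x_{2Q}`. -/
def xtP (x : Fin 4 → ℂ) : Fin 4 → ℂ :=
  ![((x 0).re : ℂ) + Complex.I * ((x 2).im : ℂ),
    ((x 1).re : ℂ) + Complex.I * ((x 3).im : ℂ),
    ((x 2).re : ℂ) + Complex.I * ((x 0).im : ℂ),
    ((x 3).re : ℂ) + Complex.I * ((x 1).im : ℂ)]

/-- The codeword `X_PCIOD` of the precoded coordinate interleaved orthogonal design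
for 4 relays. -/
def XPCIOD (h x : Fin 4 → ℂ) : Matrix (Fin 4) (Fin 4) ℂ :=
  Matrix.of
    ![![h 0 * xtP x 0, h 0 * xtP x 1, 0, 0],
      ![-(starRingEnd ℂ (h 1) * starRingEnd ℂ (xtP x 1)),
        starRingEnd ℂ (h 1) * starRingEnd ℂ (xtP x 0), 0, 0],
      ![0, 0, h 2 * xtP x 2, h 2 * xtP x 3],
      ![0, 0, -(starRingEnd ℂ (h 3) * starRingEnd ℂ (xtP x 3)),
        starRingEnd ℂ (h 3) * starRingEnd ℂ (xtP x 2)]]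

open ComplexConjugate

def alamoutiBlock (h₁ h₂ a b : ℂ) : Matrix (Fin 2) (Fin 2) ℂ :=
  !![h₁ * a, h₁ * b; -(conj h₂ * conj b), conj h₂ * conj a]

theorem alamoutiBlock_conjTranspose (h₁ h₂ a b : ℂ) :
    (alamoutiBlock h₁ h₂ a b)ᴴ = !![conj h₁ * conj a, -(h₂ * b); conj h₁ * conj b, h₂ * a] := by
  ext i j
  fin_cases i <;> fin_cases j <;> simp [alamoutiBlock]

theorem alamoutiBlock_mul_conjTranspose (h₁ h₂ a b : ℂ) :
    alamoutiBlock h₁ h₂ a b * (alamoutiBlock h₁ h₂ a b)ᴴ =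
      diagonal ![((Complex.normSq h₁ * (Complex.normSq a + Complex.normSq b) : ℝ) : ℂ),
        ((Complex.normSq h₂ * (Complex.normSq a + Complex.normSq b) : ℝ) : ℂ)] := by
  rw [alamoutiBlock_conjTranspose, alamoutiBlock, mul_fin_two, diagonal_fin_two]
  simp only [cons_val_zero, cons_val_one, EmbeddingLike.apply_eq_iff_eq, vecCons_inj, and_true,
    Complex.ofReal_mul, Complex.ofReal_add, ← Complex.mul_conj]
  refine ⟨⟨?_, ?_⟩, ?_, ?_⟩ <;> ring

theorem fromBlocks_zero_zero_mul_conjTranspose {l m n o : Type*} [Fintype l] [Fintype m]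
    {α : Type*} [NonUnitalNonAssocSemiring α] [StarRing α]
    (A : Matrix n l α) (D : Matrix o m α) :
    fromBlocks A 0 0 D * (fromBlocks A 0 0 D)ᴴ = fromBlocks (A * Aᴴ) 0 0 (D * Dᴴ) := by
  simp [fromBlocks_conjTranspose, fromBlocks_multiply]

theorem XPCIOD_eq_submatrix_fromBlocks (h x : Fin 4 → ℂ) :
    XPCIOD h x = (fromBlocks (alamoutiBlock (h 0) (h 1) (xtP x 0) (xtP x 1)) 0 0
      (alamoutiBlock (h 2) (h 3) (xtP x 2) (xtP x 3))).submatrix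
        finSumFinEquiv.symm finSumFinEquiv.symm := by
  ext i j
  fin_cases i <;> fin_cases j <;> rfl

theorem normSq_ofReal_add_I_mul (a b : ℝ) :
    Complex.normSq (a + Complex.I * b) = a ^ 2 + b ^ 2 := by
  rw [mul_comm, Complex.normSq_add_mul_I]

theorem normSq_xtP_zero_add_normSq_xtP_one (x : Fin 4 → ℂ) :
    Complex.normSq (xtP x 0) + Complex.normSq (xtP x 1) =
      (x 0).re ^ 2 + (x 1).re ^ 2 + (x 2).im ^ 2 + (x 3).im ^ 2 := by
  simp only [xtP, Matrix.cons_val, normSq_ofReal_add_I_mul]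
  ring

theorem normSq_xtP_two_add_normSq_xtP_three (x : Fin 4 → ℂ) :
    Complex.normSq (xtP x 2) + Complex.normSq (xtP x 3) =
      (x 0).im ^ 2 + (x 1).im ^ 2 + (x 2).re ^ 2 + (x 3).re ^ 2 := by
  simp only [xtP, Matrix.cons_val, normSq_ofReal_add_I_mul]
  ring

theorem sumElim_comp_finSumFinEquiv_symm {α : Type*} (a b c d : α) :
    Sum.elim ![a, b] ![c, d] ∘ finSumFinEquiv.symm = ![a, b, c, d] := by
  funext i
  fin_cases i <;> rfl

/-- The Gram matrix of the PCIOD codeword is the diagonal matrix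
`diag(|h₁|²·d₁, |h₂|²·d₁, |h₃|²·d₂, |h₄|²·d₂)` where
`d₁ = x_{1I}² + x_{2I}² + x_{3Q}² + x_{4Q}²` and `d₂ = x_{1Q}² + x_{2Q}² + x_{3I}² + x_{4I}²`;
hence the code is single-symbol decodable (and it is a non-unitary PDSSDC). -/
theorem statement13 (h x : Fin 4 → ℂ) :
    XPCIOD h x * (XPCIOD h x)ᴴ =
      Matrix.diagonal
        ![((Complex.normSq (h 0) *
            ((x 0).re ^ 2 + (x 1).re ^ 2 + (x 2).im ^ 2 + (x 3).im ^ 2) : ℝ) : ℂ),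
          ((Complex.normSq (h 1) *
            ((x 0).re ^ 2 + (x 1).re ^ 2 + (x 2).im ^ 2 + (x 3).im ^ 2) : ℝ) : ℂ),
          ((Complex.normSq (h 2) *
            ((x 0).im ^ 2 + (x 1).im ^ 2 + (x 2).re ^ 2 + (x 3).re ^ 2) : ℝ) : ℂ),
          ((Complex.normSq (h 3) *
            ((x 0).im ^ 2 + (x 1).im ^ 2 + (x 2).re ^ 2 + (x 3).re ^ 2) : ℝ) : ℂ)] := by
  rw [XPCIOD_eq_submatrix_fromBlocks, conjTranspose_submatrix, submatrix_mul_equiv,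
    fromBlocks_zero_zero_mul_conjTranspose, alamoutiBlock_mul_conjTranspose,
    alamoutiBlock_mul_conjTranspose, fromBlocks_diagonal, submatrix_diagonal_equiv,
    sumElim_comp_finSumFinEquiv_symm, normSq_xtP_zero_add_normSq_xtP_one,
    normSq_xtP_two_add_normSq_xtP_three]
end
end

section
/- Let N ≥ 2, let n ≠ n' be indices in {1,…,N}, and let ε be a nonzero complex number. Then there exist no vectors a, b ∈ ℂ^N such that for all h ∈ ℂ and all s = (s_1,…,s_N) ∈ ℂ^N: h·(Σ_{j=1}^N s_j·a_j) + conj(h)·(Σ_{j=1}^N conj(s_j)·b_j) = ε·h·(Re(s_n) + i·Im(s_{n'})). Consequently, when the source performs no precoding, no linear processing at a relay (left action by a pair of matrices A, B on the received vector and its conjugate) can produce an entry of the form ±h·x̃ in which the real and imaginary parts of x̃ come from two different information symbols; hence S-PDSSDCs other than those with uninterleaved symbols cannot be constructed without precoding at the source. -/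
/-!
Feed the relay the symbol vector `s = c • eₙ`. The entry becomes `h (c aₙ) + conj h (conj c bₙ)`
while the target is `h (ε Re c)`; comparing the parts that are complex-linear in `h` gives
`c aₙ = ε Re c` for every `c`. This is impossible for `ε ≠ 0`, since the left side is
complex-linear in `c` but the right side vanishes at `c = i` and not at `c = 1`.
-/

open ComplexConjugate

lemma Complex.eq_of_forall_mul_add_conj_mul_eq_mul {x y z : ℂ}
    (H : ∀ h : ℂ, h * x + conj h * y = h * z) : x = z := by
  have h1 := H 1
  have hI := H I
  simp only [map_one, one_mul, conj_I] at h1 hI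
  linear_combination (h1 - I * hI) / 2 + (x - y - z) / 2 * I_sq

lemma Complex.eq_zero_of_forall_mul_eq_mul_re {w ε : ℂ}
    (H : ∀ c : ℂ, c * w = ε * c.re) : ε = 0 := by
  have hw : w = 0 := by simpa using H I
  simpa [hw] using (H 1).symm

theorem statement14_general (N : ℕ) (n n' : Fin N) (hnn : n ≠ n')
    (ε : ℂ) (hε : ε ≠ 0) :
    ¬ ∃ a b : Fin N → ℂ, ∀ (h : ℂ) (s : Fin N → ℂ),
      h * (∑ j, s j * a j) + starRingEnd ℂ h * (∑ j, starRingEnd ℂ (s j) * b j)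
        = ε * h * (((s n).re : ℂ) + Complex.I * ((s n').im : ℂ)) := by
  rintro ⟨a, b, H⟩
  refine hε (Complex.eq_zero_of_forall_mul_eq_mul_re (w := a n) fun c => ?_)
  refine Complex.eq_of_forall_mul_add_conj_mul_eq_mul (y := conj c * b n) fun h => ?_
  have := H h (Pi.single n c)
  simp only [Pi.single_apply, ite_mul, zero_mul, apply_ite (starRingEnd ℂ), map_zero,
    Finset.sum_ite_eq', Finset.mem_univ, if_true, hnn.symm, if_false, Complex.zero_im,
    Complex.ofReal_zero, mul_zero, add_zero] at this
  linear_combination this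

/-- Section V of the paper. Without precoding at the source, no linear
processing at a relay can produce an entry of the form `ε·h·(Re(sₙ) + i·Im(s_{n'}))` with
`n ≠ n'`: there are no vectors `a, b ∈ ℂᴺ` such that for all `h` and `s`,
`h·(Σⱼ sⱼ·aⱼ) + conj(h)·(Σⱼ conj(sⱼ)·bⱼ) = ε·h·(Re(sₙ) + i·Im(s_{n'}))`. -/
theorem statement14 (N : ℕ) (hN : 2 ≤ N) (n n' : Fin N) (hnn : n ≠ n')
    (ε : ℂ) (hε : ε ≠ 0) :
    ¬ ∃ a b : Fin N → ℂ, ∀ (h : ℂ) (s : Fin N → ℂ),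
      h * (∑ j, s j * a j) + starRingEnd ℂ h * (∑ j, starRingEnd ℂ (s j) * b j)
        = ε * h * (((s n).re : ℂ) + Complex.I * ((s n').im : ℂ)) :=
  statement14_general N n n' hnn ε hε
end
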